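/- arXiv:2605.06555 — 4 statements merged into one kernel-verified Lean document; each statement's English description precedes it below -/
import Mathlib

section
/- Let T be a rooted tree in which every vertex has at most 2 children, with n vertices, and let 1 ≤ k ≤ n. There exists a partition of the vertex set of T into at most 6n/k parts, each of size at most k, such that each part induces a connected subtree of T having at most one vertex with a child outside the part, and moreover no child of that vertex lies inside the part. -/
/-- `u` is an ancestor of `v`: the parent chain from `v` reaches `u`. -/
def Anc {n : ℕ} (parent : Fin n → Option (Fin n)) (u v : Fin n) : Prop :=
  Relation.ReflTransGen (fun a b => parent a = some b) v u

/-- `C` induces a connected subtree: it has a vertex `r` which is an ancestor of all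
members, and `C` contains every vertex on the path from a member up to `r`. -/
def IsSubtree {n : ℕ} (parent : Fin n → Option (Fin n)) (C : Finset (Fin n)) : Prop :=
  ∃ r ∈ C, ∀ v ∈ C, Anc parent r v ∧ ∀ w, Anc parent r w → Anc parent w v → w ∈ C

/-- `v ∈ C` has a child outside `C`. -/
def HasChildOutside {n : ℕ} (parent : Fin n → Option (Fin n)) (C : Finset (Fin n))
    (v : Fin n) : Prop :=
  v ∈ C ∧ ∃ u, parent u = some v ∧ u ∉ C

/-- A cluster: a connected subtree with at most one lower boundary vertex, none of
whose children lie in the cluster. -/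
def IsCluster {n : ℕ} (parent : Fin n → Option (Fin n)) (C : Finset (Fin n)) : Prop :=
  IsSubtree parent C ∧
  (∀ v₁ v₂, HasChildOutside parent C v₁ → HasChildOutside parent C v₂ → v₁ = v₂) ∧
  (∀ v, HasChildOutside parent C v → ∀ u, parent u = some v → u ∉ C)

namespace CP
variable {n : ℕ} {parent : Fin n → Option (Fin n)} {depth : Fin n → ℕ}

lemma anc_refl (v : Fin n) : Anc parent v v := Relation.ReflTransGen.refl

lemma anc_trans {a b c : Fin n} (h1 : Anc parent a b) (h2 : Anc parent b c) :
    Anc parent a c := Relation.ReflTransGen.trans h2 h1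

lemma anc_of_parent {c v : Fin n} (h : parent c = some v) : Anc parent v c :=
  Relation.ReflTransGen.single h

lemma anc_depth (hwf : ∀ v p, parent v = some p → depth p < depth v)
    {u v : Fin n} (h : Anc parent u v) : depth u ≤ depth v := by
  induction h with
  | refl => exact le_rfl
  | tail _ h2 ih => exact le_trans (le_of_lt (hwf _ _ h2)) ih

lemma anc_depth_strict (hwf : ∀ v p, parent v = some p → depth p < depth v)
    {u v : Fin n} (h : Anc parent u v) (hne : u ≠ v) : depth u < depth v := by
  rcases Relation.ReflTransGen.cases_head h with h' | ⟨c, hc, h'⟩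
  · exact absurd h'.symm hne
  · exact lt_of_le_of_lt (anc_depth hwf h') (hwf _ _ hc)

lemma anc_antisymm (hwf : ∀ v p, parent v = some p → depth p < depth v)
    {u v : Fin n} (h1 : Anc parent u v) (h2 : Anc parent v u) : u = v := by
  by_contra hne
  exact absurd (anc_depth_strict hwf h1 hne) (not_lt.mpr (anc_depth hwf h2))

lemma anc_comparable {u w x : Fin n} (hu : Anc parent u x) (hw : Anc parent w x) :
    Anc parent u w ∨ Anc parent w u := by
  unfold Anc at hu
  revert hw
  induction hu using Relation.ReflTransGen.head_induction_on with
  | refl => exact fun hw => Or.inr hw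
  | head h' h ih =>
    intro hw
    rcases Relation.ReflTransGen.cases_head hw with rfl | ⟨c, hc, hw'⟩
    · exact Or.inl (h.head h')
    · rw [h'] at hc
      injection hc with hc; subst hc
      exact ih hw'

/-- last-step decomposition -/
lemma anc_step {v x : Fin n} (h : Anc parent v x) :
    x = v ∨ ∃ c, parent c = some v ∧ Anc parent c x := by
  rcases Relation.ReflTransGen.cases_tail h with h' | ⟨c, hc, h'⟩
  · exact Or.inl h'.symm
  · exact Or.inr ⟨c, h', hc⟩

end CP
namespace CP
variable {n : ℕ} {parent : Fin n → Option (Fin n)} {depth : Fin n → ℕ}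

/-- descendants of `v` (including `v`) -/
noncomputable def S (parent : Fin n → Option (Fin n)) (v : Fin n) : Finset (Fin n) :=
  @Finset.filter _ (fun x => Anc parent v x) (Classical.decPred _) Finset.univ

lemma mem_S {v x : Fin n} : x ∈ S parent v ↔ Anc parent v x := by
  simp [S]

lemma self_mem_S (v : Fin n) : v ∈ S parent v := mem_S.mpr (anc_refl v)

lemma S_subset {u v : Fin n} (h : Anc parent v u) : S parent u ⊆ S parent v := by
  intro x hx
  exact mem_S.mpr (anc_trans h (mem_S.mp hx))

lemma depth_le_of_mem_S (hwf : ∀ v p, parent v = some p → depth p < depth v)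
    {v x : Fin n} (h : x ∈ S parent v) : depth v ≤ depth x :=
  anc_depth hwf (mem_S.mp h)

lemma parent_notMem_S (hwf : ∀ v p, parent v = some p → depth p < depth v)
    {c v : Fin n} (h : parent c = some v) : v ∉ S parent c := by
  intro hv
  exact absurd (hwf c v h) (not_lt.mpr (depth_le_of_mem_S hwf hv))

/-- the set of children of `v` -/
def children (parent : Fin n → Option (Fin n)) (v : Fin n) : Finset (Fin n) :=
  Finset.univ.filter (fun u => parent u = some v)

lemma mem_children {v c : Fin n} : c ∈ children parent v ↔ parent c = some v := by
  simp [children]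

lemma S_children_disjoint (hwf : ∀ v p, parent v = some p → depth p < depth v)
    {v c₁ c₂ : Fin n} (h1 : parent c₁ = some v) (h2 : parent c₂ = some v)
    (hne : c₁ ≠ c₂) : Disjoint (S parent c₁) (S parent c₂) := by
  rw [Finset.disjoint_left]
  intro x hx1 hx2
  have hcomp := anc_comparable (mem_S.mp hx1) (mem_S.mp hx2)
  have key : ∀ a b : Fin n, parent a = some v → parent b = some v → a ≠ b →
      Anc parent a b → False := by
    intro a b ha hb hab hanc
    rcases Relation.ReflTransGen.cases_head hanc with h' | ⟨c, hc, h'⟩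
    · exact hab h'.symm
    · rw [hb] at hc; injection hc with hc; subst hc
      exact absurd (anc_depth hwf h') (not_le.mpr (hwf a v ha))
  rcases hcomp with h | h
  · exact key c₁ c₂ h1 h2 hne h
  · exact key c₂ c₁ h2 h1 hne.symm h

lemma mem_S_iff {v x : Fin n} :
    x ∈ S parent v ↔ x = v ∨ ∃ c, parent c = some v ∧ x ∈ S parent c := by
  constructor
  · intro hx
    rcases anc_step (mem_S.mp hx) with h | ⟨c, hc, h⟩
    · exact Or.inl h
    · exact Or.inr ⟨c, hc, mem_S.mpr h⟩
  · rintro (rfl | ⟨c, hc, h⟩)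
    · exact self_mem_S _
    · exact mem_S.mpr (anc_trans (anc_of_parent hc) (mem_S.mp h))

lemma S_card_lt (hwf : ∀ v p, parent v = some p → depth p < depth v)
    {c v : Fin n} (h : parent c = some v) :
    (S parent c).card < (S parent v).card := by
  apply Finset.card_lt_card
  constructor
  · exact S_subset (anc_of_parent h)
  · intro hsub
    exact parent_notMem_S hwf h (hsub (self_mem_S v))

lemma S_eq_of_no_children {v : Fin n} (hc : children parent v = ∅) :
    S parent v = {v} := by
  ext x
  rw [mem_S_iff, Finset.mem_singleton]
  constructor
  · rintro (rfl | ⟨c, hcp, _⟩)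
    · rfl
    · exact absurd (mem_children.mpr hcp) (by simp [hc])
  · rintro rfl; exact Or.inl rfl

lemma S_eq_one_child {v c : Fin n} (hc : children parent v = {c}) :
    S parent v = insert v (S parent c) := by
  ext x
  rw [mem_S_iff, Finset.mem_insert]
  constructor
  · rintro (rfl | ⟨c', hcp, h⟩)
    · exact Or.inl rfl
    · have : c' ∈ ({c} : Finset (Fin n)) := hc ▸ mem_children.mpr hcp
      rw [Finset.mem_singleton] at this; subst this
      exact Or.inr h
  · rintro (rfl | h)
    · exact Or.inl rfl
    · exact Or.inr ⟨c, mem_children.mp (by simp [hc]), h⟩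

lemma S_eq_two_children {v c₁ c₂ : Fin n} (hc : children parent v = {c₁, c₂}) :
    S parent v = insert v (S parent c₁ ∪ S parent c₂) := by
  have h1 : parent c₁ = some v := mem_children.mp (by rw [hc]; simp)
  have h2 : parent c₂ = some v := mem_children.mp (by rw [hc]; simp)
  ext x
  rw [mem_S_iff, Finset.mem_insert, Finset.mem_union]
  constructor
  · rintro (rfl | ⟨c', hcp, h⟩)
    · exact Or.inl rfl
    · have : c' ∈ ({c₁, c₂} : Finset (Fin n)) := hc ▸ mem_children.mpr hcp
      rcases Finset.mem_insert.mp this with rfl | h'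
      · exact Or.inr (Or.inl h)
      · rw [Finset.mem_singleton] at h'; subst h'
        exact Or.inr (Or.inr h)
  · rintro (rfl | h | h)
    · exact Or.inl rfl
    · exact Or.inr ⟨c₁, h1, h⟩
    · exact Or.inr ⟨c₂, h2, h⟩

end CP
namespace CP
variable {n : ℕ} {parent : Fin n → Option (Fin n)} {depth : Fin n → ℕ}

/-- A pending cluster at `v` with optional lower boundary `ob`. -/
def PendAt (parent : Fin n → Option (Fin n)) (v : Fin n) (ob : Option (Fin n))
    (Q : Finset (Fin n)) : Prop :=
  v ∈ Q ∧ (∀ u ∈ Q, Anc parent v u) ∧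
  (∀ u ∈ Q, u ≠ v → ∀ p, parent u = some p → p ∈ Q) ∧
  (∀ b, ob = some b → b ∈ Q ∧ ∀ c, parent c = some b → c ∉ Q) ∧
  (∀ u ∈ Q, ob ≠ some u → ∀ c, parent c = some u → c ∈ Q)

lemma pend_convex (hwf : ∀ v p, parent v = some p → depth p < depth v)
    {v : Fin n} {ob : Option (Fin n)} {Q : Finset (Fin n)} (hQ : PendAt parent v ob Q)
    {u w : Fin n} (hu : u ∈ Q) (hvw : Anc parent v w) (hwu : Anc parent w u) :
    w ∈ Q := by
  obtain ⟨hv, hanc, hup, _, _⟩ := hQ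
  unfold Anc at hwu
  revert hu
  induction hwu using Relation.ReflTransGen.head_induction_on with
  | refl => exact fun h => h
  | @head a c h' h ih =>
    intro ha
    by_cases hav : a = v
    · subst hav
      have : w = a := anc_antisymm hwf (h.head h') hvw
      exact this ▸ ha
    · exact ih (hup a ha hav c h')

lemma pend_below_bdry (hwf : ∀ v p, parent v = some p → depth p < depth v)
    {v b : Fin n} {Q : Finset (Fin n)} (hQ : PendAt parent v (some b) Q)
    {x : Fin n} (hx : x ∈ Q) (hbx : Anc parent b x) : x = b := by
  obtain ⟨hv, hanc, hup, hb, _⟩ := hQ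
  obtain ⟨hbQ, hbc⟩ := hb b rfl
  have hvb : Anc parent v b := hanc b hbQ
  unfold Anc at hbx
  revert hx
  induction hbx using Relation.ReflTransGen.head_induction_on with
  | refl => exact fun _ => rfl
  | @head a c h' h ih =>
    intro ha
    by_cases hab : a = b
    · exact hab
    · have hba : Anc parent b a := Relation.ReflTransGen.head h' h
      have hav : a ≠ v := by
        intro rfl'
        subst rfl'
        exact absurd (anc_depth hwf hvb) (not_le.mpr (anc_depth_strict hwf hba (Ne.symm hab)))
      have hcQ : c ∈ Q := hup a ha hav c h'
      have := ih hcQ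
      subst this
      exact absurd ha (hbc a h')

lemma pend_cluster (hwf : ∀ v p, parent v = some p → depth p < depth v)
    {v : Fin n} {ob : Option (Fin n)} {Q : Finset (Fin n)}
    (hQ : PendAt parent v ob Q) : IsCluster parent Q := by
  obtain ⟨hv, hanc, hup, hb, hcl⟩ := hQ
  have hQ' : PendAt parent v ob Q := ⟨hv, hanc, hup, hb, hcl⟩
  have hbdry : ∀ w, HasChildOutside parent Q w → ob = some w := by
    rintro w ⟨hwQ, u, hu, huQ⟩
    by_contra hne
    exact huQ (hcl w hwQ hne u hu)
  refine ⟨⟨v, hv, fun u hu => ⟨hanc u hu, fun w hvw hwu => pend_convex hwf hQ' hu hvw hwu⟩⟩, ?_, ?_⟩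
  · intro v₁ v₂ h1 h2
    have e1 := hbdry v₁ h1
    have e2 := hbdry v₂ h2
    rw [e1] at e2
    exact Option.some_inj.mp e2
  · intro w hw u hu
    have e := hbdry w hw
    exact (hb w e).2 u hu

end CP
namespace CP
variable {n : ℕ} {parent : Fin n → Option (Fin n)} {depth : Fin n → ℕ} {k : ℕ}

/-- the invariant carried through the bottom-up construction -/
structure Conds (parent : Fin n → Option (Fin n)) (k : ℕ) (v : Fin n)
    (P : Finset (Finset (Fin n))) (Q : Finset (Fin n)) (ob : Option (Fin n)) : Prop where
  pend : PendAt parent v ob Q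
  hQS : Q ⊆ S parent v
  hQk : Q.card ≤ k
  hP : ∀ C ∈ P, C.Nonempty ∧ C.card ≤ k ∧ IsCluster parent C ∧
    C ⊆ S parent v ∧ Disjoint C Q
  hPd : ∀ C₁ ∈ P, ∀ C₂ ∈ P, C₁ ≠ C₂ → Disjoint C₁ C₂
  cov : ∀ x ∈ S parent v, x ∈ Q ∨ ∃ C ∈ P, x ∈ C
  cnt : k * P.card + 2 * k * (ob.elim 0 fun _ => 1) + 4 * Q.card ≤ 4 * (S parent v).card

lemma leaf_conds (hk : 1 ≤ k) {v : Fin n} (hc : children parent v = ∅) :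
    Conds parent k v ∅ {v} none := by
  have hS : S parent v = {v} := S_eq_of_no_children hc
  refine ⟨⟨Finset.mem_singleton_self v, ?_, ?_, ?_, ?_⟩, ?_, ?_, ?_, ?_, ?_, ?_⟩
  · intro u hu; rw [Finset.mem_singleton] at hu; subst hu; exact anc_refl u
  · intro u hu hne; rw [Finset.mem_singleton] at hu; exact absurd hu hne
  · intro b hb; cases hb
  · intro u hu hne c hcp
    rw [Finset.mem_singleton] at hu; subst hu
    have : c ∈ children parent u := mem_children.mpr hcp
    rw [hc] at this
    exact absurd this (Finset.notMem_empty c)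
  · intro x hx; rwa [hS]
  · exact hk
  · intro C hC; cases hC
  · intro C₁ hC; cases hC
  · intro x hx; rw [hS] at hx; exact Or.inl hx
  · have h0 : ((none : Option (Fin n)).elim 0 fun _ => 1 : ℕ) = 0 := rfl
    rw [h0, hS]
    simp only [Finset.card_empty, Finset.card_singleton]
    omega

lemma un_merge (hwf : ∀ v p, parent v = some p → depth p < depth v)
    {v c : Fin n} (hc : children parent v = {c}) {P : Finset (Finset (Fin n))}
    {Q : Finset (Fin n)} {ob : Option (Fin n)} (K : Conds parent k c P Q ob)
    (hfit : Q.card + 1 ≤ k) :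
    Conds parent k v P (insert v Q) ob := by
  have hcv : parent c = some v := mem_children.mp (by simp [hc])
  have hvS : v ∉ S parent c := parent_notMem_S hwf hcv
  have hvQ : v ∉ Q := fun h => hvS (K.hQS h)
  have hSS : S parent c ⊆ S parent v := S_subset (anc_of_parent hcv)
  have hSv : S parent v = insert v (S parent c) := S_eq_one_child hc
  have hanc : ∀ u ∈ Q, Anc parent v u := fun u hu =>
    anc_trans (anc_of_parent hcv) (K.pend.2.1 u hu)
  obtain ⟨hcQ, hancc, hup, hob, hcl⟩ := K.pend
  refine ⟨⟨Finset.mem_insert_self v Q, ?_, ?_, ?_, ?_⟩, ?_, ?_, ?_, ?_, ?_, ?_⟩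
  · intro u hu
    rcases Finset.mem_insert.mp hu with rfl | hu
    · exact anc_refl u
    · exact hanc u hu
  · intro u hu hne p hp
    rcases Finset.mem_insert.mp hu with rfl | hu
    · exact absurd rfl hne
    · by_cases huc : u = c
      · subst huc
        rw [hcv] at hp; injection hp with hp; subst hp
        exact Finset.mem_insert_self _ _
      · exact Finset.mem_insert_of_mem (hup u hu huc p hp)
  · intro b hb
    obtain ⟨hbQ, hbc⟩ := hob b hb
    refine ⟨Finset.mem_insert_of_mem hbQ, ?_⟩
    intro x hx hxQ
    rcases Finset.mem_insert.mp hxQ with rfl | hxQ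
    · have : Anc parent x b := hanc b hbQ
      exact absurd (anc_depth hwf this) (not_le.mpr (hwf _ _ hx))
    · exact hbc x hx hxQ
  · intro u hu hne x hx
    rcases Finset.mem_insert.mp hu with rfl | hu
    · have : x ∈ children parent u := mem_children.mpr hx
      rw [hc, Finset.mem_singleton] at this; subst this
      exact Finset.mem_insert_of_mem hcQ
    · exact Finset.mem_insert_of_mem (hcl u hu hne x hx)
  · rw [hSv]
    exact Finset.insert_subset_insert _ K.hQS
  · calc (insert v Q).card ≤ Q.card + 1 := Finset.card_insert_le _ _
      _ ≤ k := hfit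
  · intro C hC
    obtain ⟨h1, h2, h3, h4, h5⟩ := K.hP C hC
    refine ⟨h1, h2, h3, h4.trans hSS, ?_⟩
    rw [Finset.disjoint_insert_right]
    exact ⟨fun h => hvS (h4 h), h5⟩
  · exact K.hPd
  · intro x hx
    rw [hSv] at hx
    rcases Finset.mem_insert.mp hx with rfl | hx
    · exact Or.inl (Finset.mem_insert_self _ _)
    · rcases K.cov x hx with h | h
      · exact Or.inl (Finset.mem_insert_of_mem h)
      · exact Or.inr h
  · have h1 := K.cnt
    have h2 : (insert v Q).card ≤ Q.card + 1 := Finset.card_insert_le _ _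
    have h3 : (S parent v).card = (S parent c).card + 1 := by
      rw [hSv, Finset.card_insert_of_notMem hvS]
    omega

lemma un_close (hwf : ∀ v p, parent v = some p → depth p < depth v) (hk : 1 ≤ k)
    {v c : Fin n} (hc : children parent v = {c}) {P : Finset (Finset (Fin n))}
    {Q : Finset (Fin n)} {ob : Option (Fin n)} (K : Conds parent k c P Q ob)
    (hbig : k ≤ Q.card) :
    Conds parent k v (insert Q P) {v} (some v) := by
  have hcv : parent c = some v := mem_children.mp (by simp [hc])
  have hvS : v ∉ S parent c := parent_notMem_S hwf hcv
  have hvQ : v ∉ Q := fun h => hvS (K.hQS h)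
  have hSS : S parent c ⊆ S parent v := S_subset (anc_of_parent hcv)
  have hSv : S parent v = insert v (S parent c) := S_eq_one_child hc
  refine ⟨⟨Finset.mem_singleton_self v, ?_, ?_, ?_, ?_⟩, ?_, ?_, ?_, ?_, ?_, ?_⟩
  · intro u hu; rw [Finset.mem_singleton] at hu; subst hu; exact anc_refl u
  · intro u hu hne; rw [Finset.mem_singleton] at hu; exact absurd hu hne
  · intro b hb
    injection hb with hb; subst hb
    refine ⟨Finset.mem_singleton_self _, ?_⟩
    intro x hx hxQ
    rw [Finset.mem_singleton] at hxQ; subst hxQ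
    exact absurd (hwf x x hx) (lt_irrefl _)
  · intro u hu hne x hx
    rw [Finset.mem_singleton] at hu; subst hu
    exact absurd rfl hne
  · intro x hx; rw [Finset.mem_singleton] at hx; subst hx; exact self_mem_S x
  · simpa using hk
  · intro C hC
    rcases Finset.mem_insert.mp hC with rfl | hC
    · refine ⟨⟨c, K.pend.1⟩, K.hQk, pend_cluster hwf K.pend, K.hQS.trans hSS, ?_⟩
      rw [Finset.disjoint_singleton_right]
      exact hvQ
    · obtain ⟨h1, h2, h3, h4, h5⟩ := K.hP C hC
      refine ⟨h1, h2, h3, h4.trans hSS, ?_⟩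
      rw [Finset.disjoint_singleton_right]
      exact fun h => hvS (h4 h)
  · intro C₁ hC₁ C₂ hC₂ hne
    have key : ∀ C ∈ P, Disjoint Q C := fun C hC => ((K.hP C hC).2.2.2.2).symm
    rcases Finset.mem_insert.mp hC₁ with h₁ | h₁
    · rcases Finset.mem_insert.mp hC₂ with h₂ | h₂
      · exact absurd (h₁.trans h₂.symm) hne
      · exact h₁ ▸ key C₂ h₂
    · rcases Finset.mem_insert.mp hC₂ with h₂ | h₂
      · exact h₂ ▸ (key C₁ h₁).symm
      · exact K.hPd C₁ h₁ C₂ h₂ hne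
  · intro x hx
    rw [hSv] at hx
    rcases Finset.mem_insert.mp hx with rfl | hx
    · exact Or.inl (Finset.mem_singleton_self _)
    · rcases K.cov x hx with h | h
      · exact Or.inr ⟨Q, Finset.mem_insert_self _ _, h⟩
      · obtain ⟨C, hC, hxC⟩ := h
        exact Or.inr ⟨C, Finset.mem_insert_of_mem hC, hxC⟩
  · have h1 := K.cnt
    have h2 : (insert Q P).card ≤ P.card + 1 := Finset.card_insert_le _ _
    have h3 : (S parent v).card = (S parent c).card + 1 := by
      rw [hSv, Finset.card_insert_of_notMem hvS]
    have h4 : k * (insert Q P).card ≤ k * (P.card + 1) := Nat.mul_le_mul_left _ h2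
    have h6 : k * (P.card + 1) = k * P.card + k := by ring
    have h7 : ((some v : Option (Fin n)).elim 0 fun _ => 1 : ℕ) = 1 := rfl
    rw [Finset.card_singleton, h7]
    omega

end CP
namespace CP
variable {n : ℕ} {parent : Fin n → Option (Fin n)} {depth : Fin n → ℕ} {k : ℕ}

lemma bin_merge (hwf : ∀ v p, parent v = some p → depth p < depth v)
    {v c₁ c₂ : Fin n} (hc : children parent v = {c₁, c₂}) (hne : c₁ ≠ c₂)
    {P₁ P₂ : Finset (Finset (Fin n))} {Q₁ Q₂ : Finset (Fin n)} {ob₁ : Option (Fin n)}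
    (K1 : Conds parent k c₁ P₁ Q₁ ob₁) (K2 : Conds parent k c₂ P₂ Q₂ none)
    (hfit : Q₁.card + Q₂.card + 1 ≤ k) :
    Conds parent k v (P₁ ∪ P₂) (insert v (Q₁ ∪ Q₂)) ob₁ := by
  have h1 : parent c₁ = some v := mem_children.mp (by rw [hc]; simp)
  have h2 : parent c₂ = some v := mem_children.mp (by rw [hc]; simp)
  have hSdisj : Disjoint (S parent c₁) (S parent c₂) := S_children_disjoint hwf h1 h2 hne
  have hv1 : v ∉ S parent c₁ := parent_notMem_S hwf h1
  have hv2 : v ∉ S parent c₂ := parent_notMem_S hwf h2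
  have hSS1 : S parent c₁ ⊆ S parent v := S_subset (anc_of_parent h1)
  have hSS2 : S parent c₂ ⊆ S parent v := S_subset (anc_of_parent h2)
  have hSv : S parent v = insert v (S parent c₁ ∪ S parent c₂) := S_eq_two_children hc
  have hQ1S := K1.hQS
  have hQ2S := K2.hQS
  have hvQ1 : v ∉ Q₁ := fun h => hv1 (hQ1S h)
  have hvQ2 : v ∉ Q₂ := fun h => hv2 (hQ2S h)
  obtain ⟨hc1Q, hanc1, hup1, hob1, hcl1⟩ := K1.pend
  obtain ⟨hc2Q, hanc2, hup2, hob2, hcl2⟩ := K2.pend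
  have hanc : ∀ u ∈ Q₁ ∪ Q₂, Anc parent v u := by
    intro u hu
    rcases Finset.mem_union.mp hu with hu | hu
    · exact anc_trans (anc_of_parent h1) (hanc1 u hu)
    · exact anc_trans (anc_of_parent h2) (hanc2 u hu)
  refine ⟨⟨Finset.mem_insert_self _ _, ?_, ?_, ?_, ?_⟩, ?_, ?_, ?_, ?_, ?_, ?_⟩
  · intro u hu
    rcases Finset.mem_insert.mp hu with rfl | hu
    · exact anc_refl u
    · exact hanc u hu
  · intro u hu hune p hp
    rcases Finset.mem_insert.mp hu with rfl | hu
    · exact absurd rfl hune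
    · rcases Finset.mem_union.mp hu with hu | hu
      · by_cases huc : u = c₁
        · subst huc; rw [h1] at hp; injection hp with hp; subst hp
          exact Finset.mem_insert_self _ _
        · exact Finset.mem_insert_of_mem (Finset.mem_union_left _ (hup1 u hu huc p hp))
      · by_cases huc : u = c₂
        · subst huc; rw [h2] at hp; injection hp with hp; subst hp
          exact Finset.mem_insert_self _ _
        · exact Finset.mem_insert_of_mem (Finset.mem_union_right _ (hup2 u hu huc p hp))
  · intro b hb
    obtain ⟨hbQ, hbc⟩ := hob1 b hb
    have hvb : Anc parent v b := anc_trans (anc_of_parent h1) (hanc1 b hbQ)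
    refine ⟨Finset.mem_insert_of_mem (Finset.mem_union_left _ hbQ), ?_⟩
    intro x hx hxQ
    have hbx : Anc parent b x := anc_of_parent hx
    rcases Finset.mem_insert.mp hxQ with rfl | hxQ
    · exact absurd (anc_depth hwf hvb) (not_le.mpr (hwf _ _ hx))
    · rcases Finset.mem_union.mp hxQ with hxQ | hxQ
      · exact hbc x hx hxQ
      · have hx1 : x ∈ S parent c₁ :=
          mem_S.mpr (anc_trans (hanc1 b hbQ) hbx)
        exact (Finset.disjoint_left.mp hSdisj hx1) (hQ2S hxQ)
  · intro u hu hune x hx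
    rcases Finset.mem_insert.mp hu with rfl | hu
    · have : x ∈ children parent u := mem_children.mpr hx
      rw [hc] at this
      rcases Finset.mem_insert.mp this with rfl | this
      · exact Finset.mem_insert_of_mem (Finset.mem_union_left _ hc1Q)
      · rw [Finset.mem_singleton] at this; subst this
        exact Finset.mem_insert_of_mem (Finset.mem_union_right _ hc2Q)
    · rcases Finset.mem_union.mp hu with hu | hu
      · exact Finset.mem_insert_of_mem (Finset.mem_union_left _ (hcl1 u hu hune x hx))
      · exact Finset.mem_insert_of_mem (Finset.mem_union_right _
          (hcl2 u hu (by simp) x hx))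
  · rw [hSv]
    exact Finset.insert_subset_insert _ (Finset.union_subset_union hQ1S hQ2S)
  · calc (insert v (Q₁ ∪ Q₂)).card ≤ (Q₁ ∪ Q₂).card + 1 := Finset.card_insert_le _ _
      _ ≤ Q₁.card + Q₂.card + 1 := by
          have := Finset.card_union_le Q₁ Q₂; omega
      _ ≤ k := hfit
  · intro C hC
    have hQdisj : Disjoint C (insert v (Q₁ ∪ Q₂)) → True := fun _ => trivial
    rcases Finset.mem_union.mp hC with hC | hC
    · obtain ⟨g1, g2, g3, g4, g5⟩ := K1.hP C hC
      refine ⟨g1, g2, g3, g4.trans hSS1, ?_⟩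
      rw [Finset.disjoint_insert_right, Finset.disjoint_union_right]
      exact ⟨fun h => hv1 (g4 h), g5,
        Finset.disjoint_of_subset_left g4 (Finset.disjoint_of_subset_right hQ2S hSdisj)⟩
    · obtain ⟨g1, g2, g3, g4, g5⟩ := K2.hP C hC
      refine ⟨g1, g2, g3, g4.trans hSS2, ?_⟩
      rw [Finset.disjoint_insert_right, Finset.disjoint_union_right]
      exact ⟨fun h => hv2 (g4 h),
        Finset.disjoint_of_subset_left g4 (Finset.disjoint_of_subset_right hQ1S hSdisj.symm),
        g5⟩
  · intro C₁' hC₁ C₂' hC₂ hne'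
    rcases Finset.mem_union.mp hC₁ with hC₁ | hC₁ <;>
      rcases Finset.mem_union.mp hC₂ with hC₂ | hC₂
    · exact K1.hPd _ hC₁ _ hC₂ hne'
    · exact Finset.disjoint_of_subset_left (K1.hP _ hC₁).2.2.2.1
        (Finset.disjoint_of_subset_right (K2.hP _ hC₂).2.2.2.1 hSdisj)
    · exact Finset.disjoint_of_subset_left (K2.hP _ hC₁).2.2.2.1
        (Finset.disjoint_of_subset_right (K1.hP _ hC₂).2.2.2.1 hSdisj.symm)
    · exact K2.hPd _ hC₁ _ hC₂ hne'
  · intro x hx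
    rw [hSv] at hx
    rcases Finset.mem_insert.mp hx with rfl | hx
    · exact Or.inl (Finset.mem_insert_self _ _)
    · rcases Finset.mem_union.mp hx with hx | hx
      · rcases K1.cov x hx with h | ⟨C, hC, hxC⟩
        · exact Or.inl (Finset.mem_insert_of_mem (Finset.mem_union_left _ h))
        · exact Or.inr ⟨C, Finset.mem_union_left _ hC, hxC⟩
      · rcases K2.cov x hx with h | ⟨C, hC, hxC⟩
        · exact Or.inl (Finset.mem_insert_of_mem (Finset.mem_union_right _ h))
        · exact Or.inr ⟨C, Finset.mem_union_right _ hC, hxC⟩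
  · have g1 := K1.cnt
    have g2 := K2.cnt
    have e1 : k * (P₁ ∪ P₂).card ≤ k * (P₁.card + P₂.card) :=
      Nat.mul_le_mul_left _ (Finset.card_union_le _ _)
    have e2 : k * (P₁.card + P₂.card) = k * P₁.card + k * P₂.card := by ring
    have e3 : (insert v (Q₁ ∪ Q₂)).card ≤ Q₁.card + Q₂.card + 1 := by
      have := Finset.card_union_le Q₁ Q₂
      have := Finset.card_insert_le v (Q₁ ∪ Q₂)
      omega
    have e4 : (S parent c₁).card + (S parent c₂).card + 1 ≤ (S parent v).card := by
      rw [hSv, Finset.card_insert_of_notMem (by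
        rw [Finset.mem_union]; rintro (h | h); exacts [hv1 h, hv2 h]),
        Finset.card_union_of_disjoint hSdisj]
    have e5 : ((none : Option (Fin n)).elim 0 fun _ => 1 : ℕ) = 0 := rfl
    rw [e5] at g2
    omega

lemma bin_close (hwf : ∀ v p, parent v = some p → depth p < depth v) (hk : 1 ≤ k)
    {v c₁ c₂ : Fin n} (hc : children parent v = {c₁, c₂}) (hne : c₁ ≠ c₂)
    {P₁ P₂ : Finset (Finset (Fin n))} {Q₁ Q₂ : Finset (Fin n)} {ob₁ ob₂ : Option (Fin n)}
    (K1 : Conds parent k c₁ P₁ Q₁ ob₁) (K2 : Conds parent k c₂ P₂ Q₂ ob₂)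
    (hbig : k ≤ Q₁.card + Q₂.card ∨ (ob₁.isSome ∧ ob₂.isSome)) :
    Conds parent k v (insert Q₁ (insert Q₂ (P₁ ∪ P₂))) {v} (some v) := by
  have h1 : parent c₁ = some v := mem_children.mp (by rw [hc]; simp)
  have h2 : parent c₂ = some v := mem_children.mp (by rw [hc]; simp)
  have hSdisj : Disjoint (S parent c₁) (S parent c₂) := S_children_disjoint hwf h1 h2 hne
  have hv1 : v ∉ S parent c₁ := parent_notMem_S hwf h1
  have hv2 : v ∉ S parent c₂ := parent_notMem_S hwf h2
  have hSS1 : S parent c₁ ⊆ S parent v := S_subset (anc_of_parent h1)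
  have hSS2 : S parent c₂ ⊆ S parent v := S_subset (anc_of_parent h2)
  have hSv : S parent v = insert v (S parent c₁ ∪ S parent c₂) := S_eq_two_children hc
  -- properties of all members of the new P
  have hPmem : ∀ C ∈ insert Q₁ (insert Q₂ (P₁ ∪ P₂)),
      C.Nonempty ∧ C.card ≤ k ∧ IsCluster parent C ∧
      ((C ⊆ S parent c₁ ∧ Disjoint C Q₁) ∨ (C ⊆ S parent c₂ ∧ Disjoint C Q₂) ∨
        C = Q₁ ∨ C = Q₂) := by
    intro C hC
    rcases Finset.mem_insert.mp hC with rfl | hC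
    · exact ⟨⟨c₁, K1.pend.1⟩, K1.hQk, pend_cluster hwf K1.pend, Or.inr (Or.inr (Or.inl rfl))⟩
    rcases Finset.mem_insert.mp hC with rfl | hC
    · exact ⟨⟨c₂, K2.pend.1⟩, K2.hQk, pend_cluster hwf K2.pend, Or.inr (Or.inr (Or.inr rfl))⟩
    rcases Finset.mem_union.mp hC with hC | hC
    · obtain ⟨g1, g2, g3, g4, g5⟩ := K1.hP C hC
      exact ⟨g1, g2, g3, Or.inl ⟨g4, g5⟩⟩
    · obtain ⟨g1, g2, g3, g4, g5⟩ := K2.hP C hC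
      exact ⟨g1, g2, g3, Or.inr (Or.inl ⟨g4, g5⟩)⟩
  have hQ1S := K1.hQS
  have hQ2S := K2.hQS
  refine ⟨⟨Finset.mem_singleton_self v, ?_, ?_, ?_, ?_⟩, ?_, ?_, ?_, ?_, ?_, ?_⟩
  · intro u hu; rw [Finset.mem_singleton] at hu; subst hu; exact anc_refl u
  · intro u hu hune; rw [Finset.mem_singleton] at hu; exact absurd hu hune
  · intro b hb
    injection hb with hb; subst hb
    refine ⟨Finset.mem_singleton_self _, ?_⟩
    intro x hx hxQ
    rw [Finset.mem_singleton] at hxQ; subst hxQ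
    exact absurd (hwf x x hx) (lt_irrefl _)
  · intro u hu hune x hx
    rw [Finset.mem_singleton] at hu; subst hu
    exact absurd rfl hune
  · intro x hx; rw [Finset.mem_singleton] at hx; subst hx; exact self_mem_S x
  · simpa using hk
  · intro C hC
    obtain ⟨g1, g2, g3, g4⟩ := hPmem C hC
    refine ⟨g1, g2, g3, ?_, ?_⟩
    · rcases g4 with ⟨h, _⟩ | ⟨h, _⟩ | rfl | rfl
      · exact h.trans hSS1
      · exact h.trans hSS2
      · exact hQ1S.trans hSS1
      · exact hQ2S.trans hSS2
    · rw [Finset.disjoint_singleton_right]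
      intro hvC
      rcases g4 with ⟨h, _⟩ | ⟨h, _⟩ | rfl | rfl
      · exact hv1 (h hvC)
      · exact hv2 (h hvC)
      · exact hv1 (hQ1S hvC)
      · exact hv2 (hQ2S hvC)
  · intro C₁' hC₁' C₂' hC₂' hne'
    have dQ12 : Disjoint Q₁ Q₂ :=
      Finset.disjoint_of_subset_left hQ1S (Finset.disjoint_of_subset_right hQ2S hSdisj)
    have dQ1P : ∀ D ∈ P₁ ∪ P₂, Disjoint Q₁ D := by
      intro D hD
      rcases Finset.mem_union.mp hD with hD | hD
      · exact ((K1.hP D hD).2.2.2.2).symm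
      · exact Finset.disjoint_of_subset_left hQ1S
          (Finset.disjoint_of_subset_right (K2.hP D hD).2.2.2.1 hSdisj)
    have dQ2P : ∀ D ∈ P₁ ∪ P₂, Disjoint Q₂ D := by
      intro D hD
      rcases Finset.mem_union.mp hD with hD | hD
      · exact Finset.disjoint_of_subset_left hQ2S
          (Finset.disjoint_of_subset_right (K1.hP D hD).2.2.2.1 hSdisj.symm)
      · exact ((K2.hP D hD).2.2.2.2).symm
    have key2 : ∀ D₁, D₁ ∈ P₁ ∪ P₂ → ∀ D₂, D₂ ∈ P₁ ∪ P₂ → D₁ ≠ D₂ → Disjoint D₁ D₂ := by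
      intro D₁ hD₁ D₂ hD₂ hD
      rcases Finset.mem_union.mp hD₁ with hD₁ | hD₁ <;>
        rcases Finset.mem_union.mp hD₂ with hD₂ | hD₂
      · exact K1.hPd _ hD₁ _ hD₂ hD
      · exact Finset.disjoint_of_subset_left (K1.hP _ hD₁).2.2.2.1
          (Finset.disjoint_of_subset_right (K2.hP _ hD₂).2.2.2.1 hSdisj)
      · exact Finset.disjoint_of_subset_left (K2.hP _ hD₁).2.2.2.1
          (Finset.disjoint_of_subset_right (K1.hP _ hD₂).2.2.2.1 hSdisj.symm)
      · exact K2.hPd _ hD₁ _ hD₂ hD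
    have mem3 : ∀ D, D ∈ insert Q₁ (insert Q₂ (P₁ ∪ P₂)) →
        D = Q₁ ∨ D = Q₂ ∨ D ∈ P₁ ∪ P₂ := by
      intro D hD
      rcases Finset.mem_insert.mp hD with h | hD
      · exact Or.inl h
      rcases Finset.mem_insert.mp hD with h | hD
      · exact Or.inr (Or.inl h)
      · exact Or.inr (Or.inr hD)
    rcases mem3 _ hC₁' with h₁ | h₁ | h₁ <;> rcases mem3 _ hC₂' with h₂ | h₂ | h₂
    · exact absurd (h₁.trans h₂.symm) hne'
    · subst h₁; subst h₂; exact dQ12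
    · subst h₁; exact dQ1P _ h₂
    · subst h₁; subst h₂; exact dQ12.symm
    · exact absurd (h₁.trans h₂.symm) hne'
    · subst h₁; exact dQ2P _ h₂
    · subst h₂; exact (dQ1P _ h₁).symm
    · subst h₂; exact (dQ2P _ h₁).symm
    · exact key2 _ h₁ _ h₂ hne'
  · intro x hx
    rw [hSv] at hx
    rcases Finset.mem_insert.mp hx with rfl | hx
    · exact Or.inl (Finset.mem_singleton_self _)
    · have inP : ∀ y (Qy : Finset (Fin n)), Qy ∈ insert Q₁ (insert Q₂ (P₁ ∪ P₂)) → y ∈ Qy →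
          x = y → True := fun _ _ _ _ _ => trivial
      rcases Finset.mem_union.mp hx with hx | hx
      · rcases K1.cov x hx with h | ⟨C, hC, hxC⟩
        · exact Or.inr ⟨Q₁, Finset.mem_insert_self _ _, h⟩
        · exact Or.inr ⟨C, Finset.mem_insert_of_mem (Finset.mem_insert_of_mem
            (Finset.mem_union_left _ hC)), hxC⟩
      · rcases K2.cov x hx with h | ⟨C, hC, hxC⟩
        · exact Or.inr ⟨Q₂, Finset.mem_insert_of_mem (Finset.mem_insert_self _ _), h⟩
        · exact Or.inr ⟨C, Finset.mem_insert_of_mem (Finset.mem_insert_of_mem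
            (Finset.mem_union_right _ hC)), hxC⟩
  · have g1 := K1.cnt
    have g2 := K2.cnt
    have e3 : (insert Q₁ (insert Q₂ (P₁ ∪ P₂))).card ≤ P₁.card + P₂.card + 2 := by
      have i1 := Finset.card_insert_le Q₁ (insert Q₂ (P₁ ∪ P₂))
      have i2 := Finset.card_insert_le Q₂ (P₁ ∪ P₂)
      have i3 := Finset.card_union_le P₁ P₂
      omega
    have e4 : (S parent c₁).card + (S parent c₂).card + 1 ≤ (S parent v).card := by
      rw [hSv, Finset.card_insert_of_notMem (by
        rw [Finset.mem_union]; rintro (h | h); exacts [hv1 h, hv2 h]),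
        Finset.card_union_of_disjoint hSdisj]
    have e5 : k * (insert Q₁ (insert Q₂ (P₁ ∪ P₂))).card ≤ k * (P₁.card + P₂.card + 2) :=
      Nat.mul_le_mul_left _ e3
    have e6 : k * (P₁.card + P₂.card + 2) = k * P₁.card + k * P₂.card + 2 * k := by ring
    have h7 : ((some v : Option (Fin n)).elim 0 fun _ => 1 : ℕ) = 1 := rfl
    rw [Finset.card_singleton, h7]
    rcases hbig with hbig | ⟨hs1, hs2⟩
    · omega
    · obtain ⟨b₁, hb₁⟩ := Option.isSome_iff_exists.mp hs1
      obtain ⟨b₂, hb₂⟩ := Option.isSome_iff_exists.mp hs2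
      subst hb₁; subst hb₂
      have j1 : ((some b₁ : Option (Fin n)).elim 0 fun _ => 1 : ℕ) = 1 := rfl
      have j2 : ((some b₂ : Option (Fin n)).elim 0 fun _ => 1 : ℕ) = 1 := rfl
      rw [j1] at g1; rw [j2] at g2
      omega

end CP
namespace CP
variable {n : ℕ} {parent : Fin n → Option (Fin n)} {depth : Fin n → ℕ} {k : ℕ}

lemma build (hwf : ∀ v p, parent v = some p → depth p < depth v) (hk : 1 ≤ k)
    (hbin : ∀ v : Fin n, (children parent v).card ≤ 2) (v : Fin n) :
    ∃ P Q ob, Conds parent k v P Q ob := by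
  have main : ∀ N v, (S parent v).card ≤ N → ∃ P Q ob, Conds parent k v P Q ob := by
    intro N
    induction N with
    | zero =>
      intro v hv
      have h : 0 < (S parent v).card := Finset.card_pos.mpr ⟨v, self_mem_S v⟩
      exact absurd hv (Nat.not_le.mpr h)
    | succ N ih =>
      intro v hv
      have hcard := hbin v
      rcases Nat.lt_or_ge (children parent v).card 1 with h0 | h1'
      · -- no children
        have hc : children parent v = ∅ := Finset.card_eq_zero.mp (by omega)
        exact ⟨∅, {v}, none, leaf_conds hk hc⟩
      rcases Nat.lt_or_ge (children parent v).card 2 with h1 | h2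
      · -- one child
        have hc : ∃ c, children parent v = {c} := Finset.card_eq_one.mp (by omega)
        obtain ⟨c, hc⟩ := hc
        have hcv : parent c = some v := mem_children.mp (by simp [hc])
        have hlt : (S parent c).card ≤ N := by
          have := S_card_lt hwf hcv; omega
        obtain ⟨P, Q, ob, K⟩ := ih c hlt
        by_cases hfit : Q.card + 1 ≤ k
        · exact ⟨P, insert v Q, ob, un_merge hwf hc K hfit⟩
        · exact ⟨insert Q P, {v}, some v, un_close hwf hk hc K (by omega)⟩
      · -- two children
        have hc : ∃ c₁ c₂, c₁ ≠ c₂ ∧ children parent v = {c₁, c₂} :=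
          Finset.card_eq_two.mp (le_antisymm hcard h2)
        obtain ⟨c₁, c₂, hne, hc⟩ := hc
        have h1 : parent c₁ = some v := mem_children.mp (by rw [hc]; simp)
        have h2' : parent c₂ = some v := mem_children.mp (by rw [hc]; simp)
        have hlt1 : (S parent c₁).card ≤ N := by have := S_card_lt hwf h1; omega
        have hlt2 : (S parent c₂).card ≤ N := by have := S_card_lt hwf h2'; omega
        obtain ⟨P₁, Q₁, ob₁, K1⟩ := ih c₁ hlt1
        obtain ⟨P₂, Q₂, ob₂, K2⟩ := ih c₂ hlt2
        by_cases hboth : ob₁.isSome ∧ ob₂.isSome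
        · exact ⟨_, _, _, bin_close hwf hk hc hne K1 K2 (Or.inr hboth)⟩
        by_cases hfit : Q₁.card + Q₂.card + 1 ≤ k
        · -- at most one hole: merge
          cases hob2 : ob₂ with
          | none =>
            rw [hob2] at K2
            exact ⟨_, _, _, bin_merge hwf hc hne K1 K2 hfit⟩
          | some b₂ =>
            have hob1 : ob₁ = none := by
              cases hob1 : ob₁ with
              | none => rfl
              | some b₁ =>
                exact absurd ⟨by rw [hob1]; rfl, by rw [hob2]; rfl⟩ hboth
            rw [hob1] at K1
            have hc' : children parent v = {c₂, c₁} := by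
              rw [hc]; exact Finset.pair_comm c₁ c₂
            exact ⟨_, _, _, bin_merge hwf hc' hne.symm K2 K1 (by omega)⟩
        · exact ⟨_, _, _, bin_close hwf hk hc hne K1 K2 (Or.inl (by omega))⟩
  exact main _ v le_rfl

end CP

/-- Any binary rooted tree on `n` vertices admits a cluster decomposition into at most
`6n/k` clusters, each of size at most `k`. -/
theorem stmt1 (n k : ℕ) (hk1 : 1 ≤ k) (hkn : k ≤ n)
    (parent : Fin n → Option (Fin n)) (depth : Fin n → ℕ)
    (hwf : ∀ v p, parent v = some p → depth p < depth v)
    (htree : ∃! r, parent r = none)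
    (hbin : ∀ v : Fin n, (Finset.univ.filter (fun u => parent u = some v)).card ≤ 2) :
    ∃ P : Finset (Finset (Fin n)),
      (∀ v : Fin n, ∃! C, C ∈ P ∧ v ∈ C) ∧
      ((P.card : ℝ) ≤ 6 * n / k) ∧
      (∀ C ∈ P, C.card ≤ k ∧ IsCluster parent C) := by
  classical
  obtain ⟨r, hr, hru⟩ := htree
  have reach : ∀ v, Anc parent r v := by
    have key : ∀ m v, depth v < m → Anc parent r v := by
      intro m
      induction m with
      | zero => intro v hv; exact absurd hv (Nat.not_lt_zero _)
      | succ m ih =>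
        intro v hv
        cases hp : parent v with
        | none =>
          have : v = r := hru v hp
          subst this; exact CP.anc_refl v
        | some p =>
          have hd : depth p < m := by have := hwf v p hp; omega
          exact Relation.ReflTransGen.head hp (ih p hd)
    exact fun v => key (depth v + 1) v (Nat.lt_succ_self _)
  have hSr : CP.S parent r = Finset.univ := by
    ext x; simp [CP.mem_S, reach x]
  have hSrcard : (CP.S parent r).card = n := by
    rw [hSr, Finset.card_univ, Fintype.card_fin]
  obtain ⟨P, Q, ob, K⟩ := CP.build hwf hk1 (fun v => hbin v) r
  refine ⟨insert Q P, ?_, ?_, ?_⟩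
  · intro v
    have hv : v ∈ CP.S parent r := by rw [hSr]; exact Finset.mem_univ v
    rcases K.cov v hv with h | ⟨C, hC, hvC⟩
    · refine ⟨Q, ⟨Finset.mem_insert_self _ _, h⟩, ?_⟩
      rintro C' ⟨hC', hvC'⟩
      rcases Finset.mem_insert.mp hC' with rfl | hC'
      · rfl
      · exact absurd h (Finset.disjoint_left.mp (K.hP C' hC').2.2.2.2 hvC')
    · refine ⟨C, ⟨Finset.mem_insert_of_mem hC, hvC⟩, ?_⟩
      rintro C' ⟨hC', hvC'⟩
      rcases Finset.mem_insert.mp hC' with rfl | hC'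
      · exact absurd hvC' (Finset.disjoint_left.mp (K.hP C hC).2.2.2.2 hvC)
      · by_contra hne
        exact absurd hvC (Finset.disjoint_left.mp (K.hPd C' hC' C hC hne) hvC')
  · have g := K.cnt
    rw [hSrcard] at g
    have e1 : (insert Q P).card ≤ P.card + 1 := Finset.card_insert_le _ _
    have e2 : k * (insert Q P).card ≤ k * (P.card + 1) := Nat.mul_le_mul_left _ e1
    have e3 : k * (P.card + 1) = k * P.card + k := by ring
    have enat : k * (insert Q P).card ≤ 6 * n := by omega
    have hk0 : (0:ℝ) < (k:ℝ) := by exact_mod_cast hk1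
    rw [le_div_iff₀ hk0]
    have hmc : ((insert Q P).card * k : ℕ) ≤ 6 * n := by
      rw [Nat.mul_comm]; exact enat
    calc ((insert Q P).card : ℝ) * k = (((insert Q P).card * k : ℕ) : ℝ) := by push_cast; ring
      _ ≤ ((6 * n : ℕ) : ℝ) := by exact_mod_cast hmc
      _ = 6 * n := by push_cast; ring
  · intro C hC
    rcases Finset.mem_insert.mp hC with rfl | hC
    · exact ⟨K.hQk, CP.pend_cluster hwf K.pend⟩
    · obtain ⟨_, g2, g3, _, _⟩ := K.hP C hC
      exact ⟨g2, g3⟩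
end

section
/- Let F be a rooted forest and k ≥ 1. There exists a partition P of the vertex set of F such that each part induces a connected subtree of F, and each part P ∈ P satisfies either (a) the root of F[P] is a root of F and |P| < k, or (b) |P| ≥ k and every component of F[P] minus the root of F[P] has fewer than k vertices. -/
namespace ForestAux

variable {n : ℕ}

/-- Number of vertices strictly deeper than `v`. -/
def D (depth : Fin n → ℕ) (v : Fin n) : ℕ :=
  (Finset.univ.filter (fun u => depth v < depth u)).card

lemma D_lt {depth : Fin n → ℕ} {v c : Fin n} (h : depth v < depth c) :
    D depth c < D depth v := by
  apply Finset.card_lt_card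
  rw [Finset.ssubset_iff_of_subset]
  · exact ⟨c, by simp [h], by simp⟩
  · intro u hu
    simp only [Finset.mem_filter, Finset.mem_univ, true_and] at hu ⊢
    exact h.trans hu

/-- Fueled pending-set computation. -/
def pendAux (k : ℕ) (parent : Fin n → Option (Fin n)) : ℕ → Fin n → Finset (Fin n)
  | 0, _v => {_v}
  | fuel+1, v =>
      insert v ((Finset.univ.filter (fun c => parent c = some v)).biUnion
        (fun c => if (pendAux k parent fuel c).card < k then pendAux k parent fuel c else ∅))

def pend (k : ℕ) (parent : Fin n → Option (Fin n)) (depth : Fin n → ℕ) (v : Fin n) :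
    Finset (Fin n) :=
  pendAux k parent (D depth v) v

variable {k : ℕ} {parent : Fin n → Option (Fin n)} {depth : Fin n → ℕ}

section withWf

variable (hwf : ∀ v p, parent v = some p → depth p < depth v)
include hwf

lemma pendAux_succ : ∀ fuel (v : Fin n), D depth v ≤ fuel →
    pendAux k parent (fuel+1) v = pendAux k parent fuel v := by
  intro fuel
  induction fuel with
  | zero =>
    intro v hv
    have hchild : Finset.univ.filter (fun c => parent c = some v) = ∅ := by
      rw [Finset.filter_eq_empty_iff]
      intro c _ hc
      have h1 : depth v < depth c := hwf c v hc
      have h0 : (Finset.univ.filter (fun u => depth v < depth u)) = ∅ :=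
        Finset.card_eq_zero.mp (Nat.le_zero.mp hv)
      have : c ∈ Finset.univ.filter (fun u => depth v < depth u) := by simp [h1]
      simp [h0] at this
    simp [pendAux, hchild]
  | succ fuel ih =>
    intro v hv
    show insert v _ = insert v _
    congr 1
    apply Finset.biUnion_congr rfl
    intro c hc
    simp only [Finset.mem_filter] at hc
    have hD : D depth c ≤ fuel := by
      have := D_lt (hwf c v hc.2)
      omega
    rw [ih c hD]

lemma pendAux_eq_pend : ∀ f (v : Fin n), D depth v ≤ f →
    pendAux k parent f v = pend k parent depth v := by
  intro f
  induction f with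
  | zero =>
    intro v hv
    have h0 : D depth v = 0 := Nat.le_zero.mp hv
    unfold pend; rw [h0]
  | succ f ih =>
    intro v hv
    rcases Nat.lt_or_ge (D depth v) (f+1) with h | h
    · rw [pendAux_succ hwf f v (by omega), ih v (by omega)]
    · have h1 : D depth v = f + 1 := le_antisymm hv h
      unfold pend; rw [h1]

lemma pend_eq (v : Fin n) : pend k parent depth v =
    insert v ((Finset.univ.filter (fun c => parent c = some v)).biUnion
      (fun c => if (pend k parent depth c).card < k then pend k parent depth c else ∅)) := by
  conv_lhs => rw [pend, ← pendAux_succ hwf (D depth v) v le_rfl]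
  show insert v _ = insert v _
  congr 1
  apply Finset.biUnion_congr rfl
  intro c hc
  simp only [Finset.mem_filter] at hc
  rw [pendAux_eq_pend hwf (D depth v) c (le_of_lt (D_lt (hwf c v hc.2)))]

end withWf

lemma mem_pendAux_self : ∀ f (v : Fin n), v ∈ pendAux k parent f v := by
  intro f v
  cases f <;> simp [pendAux]

lemma mem_pend_self (v : Fin n) : v ∈ pend k parent depth v :=
  mem_pendAux_self _ v

section withWf2

lemma mem_ite_empty {P : Prop} [Decidable P] (s : Finset (Fin n)) (u : Fin n) :
    u ∈ (if P then s else (∅ : Finset (Fin n))) ↔ P ∧ u ∈ s := by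
  split_ifs with h <;> simp [h]

variable (hwf : ∀ v p, parent v = some p → depth p < depth v)
include hwf

lemma mem_pend_iff {u v : Fin n} :
    u ∈ pend k parent depth v ↔ u = v ∨ ∃ c, parent c = some v ∧
      (pend k parent depth c).card < k ∧ u ∈ pend k parent depth c := by
  conv_lhs => rw [pend_eq hwf v]
  simp only [Finset.mem_insert, Finset.mem_biUnion, Finset.mem_filter, Finset.mem_univ,
    true_and, mem_ite_empty]

lemma pend_subset {c v : Fin n} (hc : parent c = some v)
    (hcard : (pend k parent depth c).card < k) :
    pend k parent depth c ⊆ pend k parent depth v := by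
  rw [pend_eq hwf v]
  intro u hu
  refine Finset.mem_insert_of_mem (Finset.mem_biUnion.mpr ⟨c, by simp [hc], ?_⟩)
  rw [if_pos hcard]; exact hu

lemma anc_depth {a u : Fin n} (h : Anc parent a u) : depth a ≤ depth u := by
  induction h with
  | refl => exact le_rfl
  | tail _hstep hlast ih => exact le_trans (le_of_lt (hwf _ _ hlast)) ih

lemma anc_strict {a u : Fin n} (h : Anc parent a u) (hne : a ≠ u) : depth a < depth u := by
  rcases Relation.ReflTransGen.cases_head h with h1 | ⟨c, hc, hca⟩
  · exact absurd h1.symm hne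
  · exact lt_of_le_of_lt (anc_depth hwf hca) (hwf u c hc)

lemma anc_antisymm {a u : Fin n} (h1 : Anc parent a u) (h2 : Anc parent u a) : a = u := by
  by_contra hne
  have t1 := anc_strict hwf h1 hne
  have t2 := anc_strict hwf h2 (Ne.symm hne)
  omega

end withWf2

lemma anc_comparable {u a b : Fin n} (ha : Anc parent a u) (hb : Anc parent b u) :
    Anc parent a b ∨ Anc parent b a := by
  unfold Anc at *
  induction ha using Relation.ReflTransGen.head_induction_on with
  | refl => exact Or.inr hb
  | head hstep htail ih =>
    rcases Relation.ReflTransGen.cases_head hb with h1 | ⟨c', hc', hcb⟩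
    · subst h1
      exact Or.inl (Relation.ReflTransGen.head hstep htail)
    · rw [hstep] at hc'
      injection hc' with h'
      exact ih (h' ▸ hcb)

/-- Fueled block-root computation. -/
def bAux (k : ℕ) (parent : Fin n → Option (Fin n)) (depth : Fin n → ℕ) :
    ℕ → Fin n → Fin n
  | 0, v => v
  | f+1, v =>
      if k ≤ (pend k parent depth v).card then v
      else
        match parent v with
        | none => v
        | some p => bAux k parent depth f p

def broot (k : ℕ) (parent : Fin n → Option (Fin n)) (depth : Fin n → ℕ) (v : Fin n) : Fin n :=
  bAux k parent depth (depth v) v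

section main

variable (hwf : ∀ v p, parent v = some p → depth p < depth v)
include hwf

lemma child_eq {c c' r : Fin n} (hc : parent c = some r) (hc' : parent c' = some r)
    (h : Anc parent c' c) : c' = c := by
  rcases Relation.ReflTransGen.cases_head h with h1 | ⟨p, hp, hpc⟩
  · exact h1.symm
  · rw [hc] at hp
    injection hp with hp
    subst hp
    have h1 : depth c' ≤ depth r := anc_depth hwf hpc
    have h2 : depth r < depth c' := hwf c' r hc'
    omega

lemma anc_of_mem_pend_aux : ∀ m (v : Fin n), D depth v < m →
    ∀ u ∈ pend k parent depth v, Anc parent v u := by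
  intro m
  induction m with
  | zero => intro v hv; omega
  | succ m ih =>
    intro v hv u hu
    rcases (mem_pend_iff hwf).mp hu with rfl | ⟨c, hc, hcard, hmem⟩
    · exact Relation.ReflTransGen.refl
    · have hD : D depth c < m := by
        have := D_lt (hwf c v hc); omega
      exact Relation.ReflTransGen.tail (ih c hD u hmem) hc

lemma anc_of_mem_pend {v u : Fin n} (hu : u ∈ pend k parent depth v) :
    Anc parent v u :=
  anc_of_mem_pend_aux hwf (D depth v + 1) v (by omega) u hu

lemma between_aux : ∀ m (r : Fin n), D depth r < m →
    ∀ u ∈ pend k parent depth r, ∀ w, Anc parent r w → Anc parent w u →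
      w ∈ pend k parent depth r := by
  intro m
  induction m with
  | zero => intro r hr; omega
  | succ m ih =>
    intro r hr u hu w hrw hwu
    by_cases hwr : w = r
    · subst hwr; exact mem_pend_self _
    rcases (mem_pend_iff hwf).mp hu with rfl | ⟨c, hc, hcard, hmem⟩
    · exact absurd (anc_antisymm hwf hrw (hwu)) (Ne.symm hwr)
    · have hcu : Anc parent c u := anc_of_mem_pend hwf hmem
      rcases anc_comparable hcu hwu with hcw | hwc
      ·
        have hD : D depth c < m := by have := D_lt (hwf c r hc); omega
        exact pend_subset hwf hc hcard (ih c hD u hmem w hcw hwu)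
      · -- Anc w c : w ancestor of c
        rcases Relation.ReflTransGen.cases_head hwc with h1 | ⟨p, hp, hpw⟩
        · subst h1; exact pend_subset hwf hc hcard (mem_pend_self _)
        · rw [hc] at hp; injection hp with hp; subst hp
          exact absurd (anc_antisymm hwf hrw hpw) (Ne.symm hwr)

lemma between {r u w : Fin n} (hu : u ∈ pend k parent depth r)
    (hrw : Anc parent r w) (hwu : Anc parent w u) : w ∈ pend k parent depth r :=
  between_aux hwf (D depth r + 1) r (by omega) u hu w hrw hwu

/-- The unique child of `r` containing a given member of `pend r`. -/
lemma child_mem {r c u : Fin n} (hu : u ∈ pend k parent depth r)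
    (hc : parent c = some r) (hcu : Anc parent c u) :
    (pend k parent depth c).card < k ∧ u ∈ pend k parent depth c := by
  have hur : u ≠ r := by
    intro h; subst h
    have h1 : depth c ≤ depth u := anc_depth hwf hcu
    have h2 : depth u < depth c := hwf c u hc
    omega
  rcases (mem_pend_iff hwf).mp hu with h1 | ⟨c', hc', hcard', hmem'⟩
  · exact absurd h1 hur
  · have hc'u : Anc parent c' u := anc_of_mem_pend hwf hmem'
    rcases anc_comparable hcu hc'u with h | h
    · have : c = c' := child_eq hwf hc' hc h
      subst this; exact ⟨hcard', hmem'⟩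
    · have : c' = c := child_eq hwf hc hc' h
      subst this; exact ⟨hcard', hmem'⟩

lemma bAux_succ : ∀ f (v : Fin n), depth v ≤ f →
    bAux k parent depth (f+1) v = bAux k parent depth f v := by
  intro f
  induction f with
  | zero =>
    intro v hv
    show (if _ then _ else _) = v
    split_ifs with h
    · rfl
    · cases hp : parent v with
      | none => rfl
      | some p =>
        have := hwf v p hp
        omega
  | succ f ih =>
    intro v hv
    show (if _ then _ else _) = (if _ then _ else _)
    split_ifs with h
    · rfl
    · cases hp : parent v with
      | none => rfl
      | some p =>
        have hd : depth p ≤ f := by have := hwf v p hp; omega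
        exact ih p hd

lemma bAux_eq_broot : ∀ f (v : Fin n), depth v ≤ f →
    bAux k parent depth f v = broot k parent depth v := by
  intro f
  induction f with
  | zero =>
    intro v hv
    have h0 : depth v = 0 := Nat.le_zero.mp hv
    unfold broot; rw [h0]
  | succ f ih =>
    intro v hv
    rcases Nat.lt_or_ge (depth v) (f+1) with h | h
    · rw [bAux_succ hwf f v (by omega), ih v (by omega)]
    · have h1 : depth v = f + 1 := le_antisymm hv h
      unfold broot; rw [h1]

lemma broot_eq (v : Fin n) : broot k parent depth v =
    if k ≤ (pend k parent depth v).card then v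
    else
      match parent v with
      | none => v
      | some p => broot k parent depth p := by
  conv_lhs => rw [broot, ← bAux_succ hwf (depth v) v le_rfl]
  show (if _ then _ else _) = (if _ then _ else _)
  split_ifs with h
  · rfl
  · cases hp : parent v with
    | none => rfl
    | some p => exact bAux_eq_broot hwf (depth v) p (le_of_lt (hwf v p hp))

lemma broot_props_aux : ∀ m (v : Fin n), depth v < m →
    Anc parent (broot k parent depth v) v ∧
    pend k parent depth v ⊆ pend k parent depth (broot k parent depth v) ∧
    (k ≤ (pend k parent depth (broot k parent depth v)).card ∨
      parent (broot k parent depth v) = none) := by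
  intro m
  induction m with
  | zero => intro v hv; omega
  | succ m ih =>
    intro v hv
    by_cases hcard : k ≤ (pend k parent depth v).card
    · have hb : broot k parent depth v = v := by rw [broot_eq hwf v, if_pos hcard]
      rw [hb]
      exact ⟨Relation.ReflTransGen.refl, subset_rfl, Or.inl hcard⟩
    · cases hp : parent v with
      | none =>
        have hb : broot k parent depth v = v := by
          rw [broot_eq hwf v, if_neg hcard]; simp [hp]
        rw [hb]
        exact ⟨Relation.ReflTransGen.refl, subset_rfl, Or.inr hp⟩
      | some p =>
        have hb : broot k parent depth v = broot k parent depth p := by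
          rw [broot_eq hwf v, if_neg hcard]; simp [hp]
        have hd : depth p < m := by have := hwf v p hp; omega
        obtain ⟨h1, h2, h3⟩ := ih p hd
        rw [hb]
        refine ⟨Relation.ReflTransGen.head hp h1, ?_, h3⟩
        exact (pend_subset hwf hp (not_le.mp hcard)).trans h2

lemma broot_anc (v : Fin n) : Anc parent (broot k parent depth v) v :=
  (broot_props_aux hwf (depth v + 1) v (by omega)).1

lemma pend_subset_broot (v : Fin n) :
    pend k parent depth v ⊆ pend k parent depth (broot k parent depth v) :=
  (broot_props_aux hwf (depth v + 1) v (by omega)).2.1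

lemma broot_spec (v : Fin n) :
    k ≤ (pend k parent depth (broot k parent depth v)).card ∨
      parent (broot k parent depth v) = none :=
  (broot_props_aux hwf (depth v + 1) v (by omega)).2.2

lemma broot_fix {r : Fin n}
    (hr : k ≤ (pend k parent depth r).card ∨ parent r = none) :
    broot k parent depth r = r := by
  rw [broot_eq hwf r]
  rcases hr with h | h
  · rw [if_pos h]
  · split_ifs with h'
    · rfl
    · simp [h]

lemma broot_const_aux : ∀ m (c : Fin n), D depth c < m →
    (pend k parent depth c).card < k →
    ∀ u ∈ pend k parent depth c, broot k parent depth u = broot k parent depth c := by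
  intro m
  induction m with
  | zero => intro c hc; omega
  | succ m ih =>
    intro c hc hcard u hu
    rcases (mem_pend_iff hwf).mp hu with rfl | ⟨c', hc', hcard', hmem'⟩
    · rfl
    · have hD : D depth c' < m := by have := D_lt (hwf c' c hc'); omega
      rw [ih c' hD hcard' u hmem']
      rw [broot_eq hwf c', if_neg (not_le.mpr hcard')]
      simp [hc']

lemma broot_of_mem {r u : Fin n}
    (hr : k ≤ (pend k parent depth r).card ∨ parent r = none)
    (hu : u ∈ pend k parent depth r) : broot k parent depth u = r := by
  rcases (mem_pend_iff hwf).mp hu with rfl | ⟨c, hc, hcard, hmem⟩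
  · exact broot_fix hwf hr
  · rw [broot_const_aux hwf (D depth c + 1) c (by omega) hcard u hmem]
    rw [broot_eq hwf c, if_neg (not_le.mpr hcard)]
    simp [hc]
    exact broot_fix hwf hr

end main

end ForestAux

open ForestAux in
/-- Every rooted forest admits a partition into connected parts where each part either
contains a root of `F` and has size `< k`, or has size `≥ k` and splits into components
of size `< k` upon removal of its root. -/
theorem stmt2 (n k : ℕ) (hk : 1 ≤ k)
    (parent : Fin n → Option (Fin n)) (depth : Fin n → ℕ)
    (hwf : ∀ v p, parent v = some p → depth p < depth v) :
    ∃ P : Finset (Finset (Fin n)),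
      (∀ v : Fin n, ∃! C, C ∈ P ∧ v ∈ C) ∧
      ∀ C ∈ P, ∃ r ∈ C,
        (∀ v ∈ C, Anc parent r v ∧ ∀ w, Anc parent r w → Anc parent w v → w ∈ C) ∧
        ((parent r = none ∧ C.card < k) ∨
         (k ≤ C.card ∧ ∀ c ∈ C, parent c = some r →
            Set.ncard {v | v ∈ C ∧ Anc parent c v} < k)) := by
  classical
  refine ⟨Finset.image (fun v => pend k parent depth (broot k parent depth v)) Finset.univ,
    ?_, ?_⟩
  · intro v
    refine ⟨pend k parent depth (broot k parent depth v),
      ⟨Finset.mem_image.mpr ⟨v, Finset.mem_univ v, rfl⟩,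
        pend_subset_broot hwf v (mem_pend_self v)⟩, ?_⟩
    rintro C ⟨hC, hvC⟩
    obtain ⟨w, _, rfl⟩ := Finset.mem_image.mp hC
    have : broot k parent depth v = broot k parent depth w :=
      broot_of_mem hwf (broot_spec (k := k) hwf w) hvC
    rw [this]
  · intro C hC
    obtain ⟨w, _, rfl⟩ := Finset.mem_image.mp hC
    set r := broot k parent depth w with hrdef
    have hrspec := broot_spec (k := k) hwf w
    refine ⟨r, mem_pend_self r, ?_, ?_⟩
    · intro v hv
      exact ⟨anc_of_mem_pend hwf hv, fun w' hrw' hw'v => between hwf hv hrw' hw'v⟩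
    · by_cases hcard : k ≤ (pend k parent depth r).card
      · refine Or.inr ⟨hcard, ?_⟩
        intro c hc hpc
        have hcu : Anc parent c c := Relation.ReflTransGen.refl
        obtain ⟨hck, _⟩ := child_mem hwf hc hpc hcu
        have hset : {v | v ∈ pend k parent depth r ∧ Anc parent c v} =
            ↑(pend k parent depth c) := by
          ext v
          simp only [Set.mem_setOf_eq, Finset.coe_mem, Finset.mem_coe]
          constructor
          · rintro ⟨hvC, hcv⟩
            exact (child_mem hwf hvC hpc hcv).2
          · intro hv
            exact ⟨pend_subset hwf hpc hck hv, anc_of_mem_pend hwf hv⟩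
        rw [hset, Set.ncard_coe_finset]
        exact hck
      · rcases hrspec with h | h
        · exact absurd h hcard
        · exact Or.inl ⟨h, not_le.mp hcard⟩
end

section
/- Let F be a rooted forest with n vertices in which every vertex has at most one parent, and let E be a set of at most m edges of F. Let C be the collection of connected components of F − E. Then C can be partitioned into two subfamilies C₁ and C₂ such that for each i ∈ {1,2}, the number of edges of E needed to separate all components of Cᵢ from each other within F is at most ⌊m/2⌋. -/
/-!
The separation cost of a family `s` of components is `#s - #(s.image tree)`. Pick one component
in each tree; this set `r` costs nothing, and every other component of `s` adds one to the cost.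
Put `r` together with half of the remaining components on one side: that side costs exactly half
of `cost s` rounded down, and the other side, when nonempty, costs less than its size, which is
half of `cost s` rounded up.
-/

open Finset

namespace Finset

variable {α β : Type*} [DecidableEq β]

def imageDefect (f : α → β) (s : Finset α) : ℕ := #s - #(s.image f)

theorem imageDefect_add_card_image (f : α → β) (s : Finset α) :
    imageDefect f s + #(s.image f) = #s := by
  have := card_image_le (s := s) (f := f)
  unfold imageDefect
  omega

theorem sum_card_fiber_sub_one_eq_imageDefect (f : α → β) (s : Finset α) :
    ∑ t ∈ s.image f, (#{x ∈ s | f x = t} - 1) = imageDefect f s := by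
  have hfiber : ∀ t ∈ s.image f, #{x ∈ s | f x = t} - 1 + 1 = #{x ∈ s | f x = t} := by
    intro t ht
    obtain ⟨a, ha, rfl⟩ := mem_image.mp ht
    have : 0 < #{x ∈ s | f x = f a} := card_pos.mpr ⟨a, mem_filter.mpr ⟨ha, rfl⟩⟩
    omega
  have hsum : ∑ t ∈ s.image f, (#{x ∈ s | f x = t} - 1) + #(s.image f) = #s := by
    rw [card_eq_sum_card_image f s, ← sum_congr rfl hfiber, sum_add_distrib, sum_const,
      smul_eq_mul, mul_one]
  have := imageDefect_add_card_image f s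
  omega

theorem imageDefect_lt_card {f : α → β} {s : Finset α} (hs : s.Nonempty) :
    imageDefect f s < #s := by
  have := imageDefect_add_card_image f s
  have := card_pos.mpr (hs.image f)
  omega

theorem imageDefect_eq_card_sdiff [DecidableEq α] {f : α → β} {s r : Finset α} (hrs : r ⊆ s)
    (hr : Set.InjOn f r) (himage : r.image f = s.image f) :
    imageDefect f s = #(s \ r) := by
  rw [imageDefect, ← himage, card_image_of_injOn hr, card_sdiff_of_subset hrs]

theorem exists_subset_imageDefect_le_half [DecidableEq α] (f : α → β) (s : Finset α) :
    ∃ s₁ ⊆ s, imageDefect f s₁ ≤ imageDefect f s / 2 ∧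
      imageDefect f (s \ s₁) ≤ imageDefect f s / 2 := by
  obtain ⟨r, hrs, hr, hrimage⟩ := exists_subset_injOn_image_eq_of_surjOn (s : Set α) (s.image f)
    (by rw [coe_image]; exact Set.surjOn_image f s)
  replace hrs : r ⊆ s := by exact_mod_cast hrs
  obtain ⟨x, hx, hxcard⟩ := exists_subset_card_eq (Nat.div_le_self #(s \ r) 2)
  have hs₁ : r ∪ x ⊆ s := union_subset hrs (hx.trans sdiff_subset)
  rw [imageDefect_eq_card_sdiff hrs hr hrimage]
  refine ⟨r ∪ x, hs₁, ?_, ?_⟩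
  · have himage : r.image f = (r ∪ x).image f :=
      (image_subset_image subset_union_left).antisymm (hrimage ▸ image_subset_image hs₁)
    rw [imageDefect_eq_card_sdiff subset_union_left hr himage, union_sdiff_left,
      sdiff_eq_self_of_disjoint (disjoint_of_subset_left hx sdiff_disjoint), hxcard]
  · rw [show s \ (r ∪ x) = (s \ r) \ x from sdiff_sdiff_left.symm]
    rcases ((s \ r) \ x).eq_empty_or_nonempty with hempty | hne
    · simp [hempty, imageDefect]
    · have := imageDefect_lt_card (f := f) hne
      rw [card_sdiff_of_subset hx, hxcard] at this
      omega

end Finset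

/-- Separation-cost partition lemma. `S` is the collection of connected components of
`F - E`, `tree` assigns to each component the tree of `F` containing it, and the cost
of a subfamily `S'` is `∑_T (#components of S' in T − 1)` (the number of edges of `E`
needed to separate the components of `S'` from each other). If `cost S ≤ m`, then `S`
splits into two subfamilies of cost at most `⌊m/2⌋` each. -/
theorem stmt3 {α β : Type*} [DecidableEq α] [DecidableEq β]
    (m : ℕ) (S : Finset α) (tree : α → β)
    (cost : Finset α → ℕ)
    (hcost : ∀ S' : Finset α,
      cost S' = ∑ t ∈ S'.image tree, ((S'.filter (fun x => tree x = t)).card - 1))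
    (hS : cost S ≤ m) :
    ∃ S₁ ⊆ S, cost S₁ ≤ m / 2 ∧ cost (S \ S₁) ≤ m / 2 := by
  simp only [hcost, sum_card_fiber_sub_one_eq_imageDefect] at hS ⊢
  obtain ⟨S₁, hS₁, h₁, h₂⟩ := exists_subset_imageDefect_le_half tree S
  have hhalf := Nat.div_le_div_right (c := 2) hS
  exact ⟨S₁, hS₁, h₁.trans hhalf, h₂.trans hhalf⟩
end

section
/- Let F be a rooted forest with n vertices, partitioned by a decomposition as in the decomposition lemma with parameter k: each part either has size < k and contains a root of F, or has size ≥ k. Then the number of parts of size ≥ k is at most n/k, and the total number of parts P such that F[P] is not a full connected component of F of size < k is at most 2n/k. -/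
/-- `u` and `v` lie in the same connected component of the rooted forest. -/
def SameComp {n : ℕ} (parent : Fin n → Option (Fin n)) (u v : Fin n) : Prop :=
  ∃ r, parent r = none ∧ Anc parent r u ∧ Anc parent r v

/-- A part is special if it induces an entire connected component of `F` and has size
`< k`. -/
def IsSpecial {n k : ℕ} (parent : Fin n → Option (Fin n)) (C : Finset (Fin n)) : Prop :=
  C.card < k ∧ ∀ v ∈ C, ∀ u, SameComp parent u v → u ∈ C

section Aux
variable {n : ℕ} {parent : Fin n → Option (Fin n)}

lemma anc_trans {a b c : Fin n} (h1 : Anc parent a b) (h2 : Anc parent b c) :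
    Anc parent a c := h2.trans h1

lemma anc_of_root {r s : Fin n} (h : Anc parent s r) (hr : parent r = none) : s = r := by
  rcases h.cases_head with h | ⟨c, hc, -⟩
  · exact h.symm
  · simp [hr] at hc

lemma root_unique {r r' v : Fin n} (h : Anc parent r v) (h' : Anc parent r' v)
    (hr : parent r = none) (hr' : parent r' = none) : r = r' := by
  induction h using Relation.ReflTransGen.head_induction_on with
  | refl => exact (anc_of_root h' hr).symm
  | head hstep _ ih =>
      rename_i a c _
      rcases h'.cases_head with h'' | ⟨c', hc', htail⟩
      · rw [← h''] at hr'; simp [hstep] at hr'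
      · rw [hstep] at hc'
        exact ih (Option.some_injective _ hc' ▸ htail)

lemma root_exists (depth : Fin n → ℕ)
    (hwf : ∀ v p, parent v = some p → depth p < depth v) (v : Fin n) :
    ∃ r, parent r = none ∧ Anc parent r v := by
  suffices H : ∀ d (v : Fin n), depth v ≤ d → ∃ r, parent r = none ∧ Anc parent r v from
    H (depth v) v le_rfl
  intro d
  induction d with
  | zero =>
      intro v hv
      cases hp : parent v with
      | none => exact ⟨v, hp, .refl⟩
      | some p => exact absurd (hwf v p hp) (by omega)
  | succ d ih =>
      intro v hv
      cases hp : parent v with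
      | none => exact ⟨v, hp, .refl⟩
      | some p =>
          obtain ⟨r, hr, ha⟩ := ih p (by have := hwf v p hp; omega)
          exact ⟨r, hr, Relation.ReflTransGen.head hp ha⟩

end Aux

/-- Given a decomposition where each part contains a root and has size `< k` or has
size `≥ k`: the number of parts of size `≥ k` is at most `n/k`, and the number of
non-special parts is at most `2n/k`. -/
theorem stmt11 (n k : ℕ) (hk : 1 ≤ k)
    (parent : Fin n → Option (Fin n)) (depth : Fin n → ℕ)
    (hwf : ∀ v p, parent v = some p → depth p < depth v)
    (P : Finset (Finset (Fin n)))
    (hpart : ∀ v : Fin n, ∃! C, C ∈ P ∧ v ∈ C)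
    (hsub : ∀ C ∈ P, IsSubtree parent C)
    (halt : ∀ C ∈ P, ((∃ r ∈ C, parent r = none) ∧ C.card < k) ∨ k ≤ C.card) :
    ((Set.ncard {C | C ∈ P ∧ k ≤ C.card} : ℝ) ≤ (n : ℝ) / k) ∧
    ((Set.ncard {C | C ∈ P ∧ ¬ IsSpecial (k := k) parent C} : ℝ) ≤ 2 * (n : ℝ) / k) := by
  classical
  have hkR : (0 : ℝ) < k := by exact_mod_cast hk
  -- distinct parts are disjoint
  have hdisj : ∀ C ∈ P, ∀ D ∈ P, C ≠ D → Disjoint C D := by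
    intro C hC D hD hne
    rw [Finset.disjoint_left]
    intro v hvC hvD
    obtain ⟨E, -, hu⟩ := hpart v
    exact hne ((hu C ⟨hC, hvC⟩).trans (hu D ⟨hD, hvD⟩).symm)
  -- a root lying in a part is an ancestor of everything in that part
  have hroot_anc : ∀ C ∈ P, ∀ r ∈ C, parent r = none → ∀ v ∈ C, Anc parent r v := by
    intro C hC r hr hrn v hv
    obtain ⟨s, hs, hprop⟩ := hsub C hC
    have hsr : s = r := anc_of_root (hprop r hr).1 hrn
    exact hsr ▸ (hprop v hv).1
  set Pbig := P.filter (fun C => k ≤ C.card) with hPbigdef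
  -- part 1: the big parts
  have hbigsum : k * Pbig.card ≤ n := by
    have hdb : ∀ C ∈ Pbig, ∀ D ∈ Pbig, C ≠ D → Disjoint C D := by
      intro C hC D hD hne
      exact hdisj C (Finset.mem_filter.mp hC).1 D (Finset.mem_filter.mp hD).1 hne
    calc k * Pbig.card = ∑ _C ∈ Pbig, k := by rw [Finset.sum_const, smul_eq_mul, mul_comm]
      _ ≤ ∑ C ∈ Pbig, C.card :=
          Finset.sum_le_sum (fun C hC => (Finset.mem_filter.mp hC).2)
      _ = (Pbig.biUnion id).card := (Finset.card_biUnion hdb).symm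
      _ ≤ (Finset.univ : Finset (Fin n)).card := Finset.card_le_card (Finset.subset_univ _)
      _ = n := by simp
  have h1 : (Pbig.card : ℝ) ≤ (n : ℝ) / k := by
    rw [le_div_iff₀ hkR]
    exact_mod_cast (mul_comm k Pbig.card ▸ hbigsum)
  -- part 2: small non-special parts inject into big parts
  set Psm := P.filter (fun C => ¬ IsSpecial (k := k) parent C ∧ C.card < k) with hPsmdef
  have hwit : ∀ C ∈ Psm, ∃ u, u ∉ C ∧ ∃ r ∈ C, parent r = none ∧ Anc parent r u := by
    intro C hC
    rw [hPsmdef, Finset.mem_filter] at hC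
    obtain ⟨hCP, hns, hcard⟩ := hC
    obtain ⟨⟨r, hrC, hrn⟩, -⟩ := (halt C hCP).resolve_right (by omega)
    rw [IsSpecial] at hns
    push_neg at hns
    obtain ⟨v, hv, u, hscu, hu⟩ := hns hcard
    obtain ⟨ρ, hρn, hρu, hρv⟩ := hscu
    have hρr : ρ = r := root_unique hρv (hroot_anc C hCP r hrC hrn v hv) hρn hrn
    exact ⟨u, hu, r, hrC, hrn, hρr ▸ hρu⟩
  set f : Finset (Fin n) → Finset (Fin n) := fun C =>
    if h : ∃ u, u ∉ C ∧ ∃ r ∈ C, parent r = none ∧ Anc parent r u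
    then (hpart h.choose).exists.choose else ∅ with hf
  have hfspec : ∀ C ∈ Psm, f C ∈ P ∧
      ∃ u, u ∉ C ∧ u ∈ f C ∧ ∃ r ∈ C, parent r = none ∧ Anc parent r u := by
    intro C hC
    have h := hwit C hC
    simp only [hf, dif_pos h]
    obtain ⟨hfP, hfu⟩ := (hpart h.choose).exists.choose_spec
    obtain ⟨hu1, r, hr, hrn, hanc⟩ := h.choose_spec
    exact ⟨hfP, h.choose, hu1, hfu, r, hr, hrn, hanc⟩
  have hfbig : ∀ C ∈ Psm, f C ∈ Pbig := by
    intro C hC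
    obtain ⟨hfP, u, hu, hufC, r, hrC, hrn, hanc⟩ := hfspec C hC
    have hCP : C ∈ P := (Finset.mem_filter.mp hC).1
    rw [hPbigdef, Finset.mem_filter]
    refine ⟨hfP, ?_⟩
    by_contra hlt
    push_neg at hlt
    obtain ⟨⟨r', hr'fC, hr'n⟩, -⟩ := (halt _ hfP).resolve_right (by omega)
    have hrr : r' = r := root_unique (hroot_anc _ hfP r' hr'fC hr'n u hufC) hanc hr'n hrn
    have hrfC : r ∈ f C := hrr ▸ hr'fC
    have hCeq : C = f C := by
      obtain ⟨E, -, huniq⟩ := hpart r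
      exact (huniq C ⟨hCP, hrC⟩).trans (huniq (f C) ⟨hfP, hrfC⟩).symm
    exact hu (hCeq ▸ hufC)
  have hinj : Set.InjOn f Psm := by
    intro C1 h1 C2 h2 heq
    obtain ⟨hf1, u1, hu1, hu1f, r1, hr1C, hr1n, ha1⟩ := hfspec C1 h1
    obtain ⟨hf2, u2, hu2, hu2f, r2, hr2C, hr2n, ha2⟩ := hfspec C2 h2
    obtain ⟨s, hs, hprop⟩ := hsub (f C1) hf1
    obtain ⟨ρ, hρn, hρs⟩ := root_exists depth hwf s
    have e1 : ρ = r1 := root_unique (anc_trans hρs (hprop u1 hu1f).1) ha1 hρn hr1n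
    have e2 : ρ = r2 := root_unique (anc_trans hρs (hprop u2 (heq ▸ hu2f)).1) ha2 hρn hr2n
    by_contra hne
    have hr12 : r1 ∈ C2 := (e1.symm.trans e2) ▸ hr2C
    exact Finset.disjoint_left.mp
      (hdisj C1 (Finset.mem_filter.mp h1).1 C2 (Finset.mem_filter.mp h2).1 hne) hr1C hr12
  have hsmcard : Psm.card ≤ Pbig.card :=
    Finset.card_le_card_of_injOn f (fun C hC => hfbig C hC) (fun a ha b hb => hinj ha hb)
  set Pns := P.filter (fun C => ¬ IsSpecial (k := k) parent C) with hPnsdef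
  have hnscard : Pns.card ≤ Pbig.card + Psm.card := by
    have hsub2 : Pns ⊆ Pbig ∪ Psm := by
      intro C hC
      rw [hPnsdef, Finset.mem_filter] at hC
      rw [Finset.mem_union]
      by_cases h : k ≤ C.card
      · exact Or.inl (Finset.mem_filter.mpr ⟨hC.1, h⟩)
      · exact Or.inr (Finset.mem_filter.mpr ⟨hC.1, hC.2, by omega⟩)
    calc Pns.card ≤ (Pbig ∪ Psm).card := Finset.card_le_card hsub2
      _ ≤ Pbig.card + Psm.card := Finset.card_union_le _ _
  have hns2 : k * Pns.card ≤ 2 * n := by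
    have : k * Pns.card ≤ k * (2 * Pbig.card) :=
      Nat.mul_le_mul_left k (by omega)
    calc k * Pns.card ≤ k * (2 * Pbig.card) := this
      _ = 2 * (k * Pbig.card) := by ring
      _ ≤ 2 * n := by omega
  constructor
  · have hset : {C | C ∈ P ∧ k ≤ C.card} = (↑Pbig : Set (Finset (Fin n))) := by
      ext C; simp [hPbigdef]
    rw [hset, Set.ncard_coe_finset]
    exact h1
  · have hset : {C | C ∈ P ∧ ¬ IsSpecial (k := k) parent C} = (↑Pns : Set (Finset (Fin n))) := by
      ext C; simp [hPnsdef]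
    rw [hset, Set.ncard_coe_finset]
    rw [le_div_iff₀ hkR]
    exact_mod_cast (mul_comm k Pns.card ▸ hns2)
end
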